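/- For the weighted monomial count with two weights: let a, b > 0 be real. Then #{(m,n) ∈ ℤ₊² : am + bn ≤ x} = x²/(2ab) + O(x) as x → ∞, and moreover lim_{T→∞} (1/T²)·∫₀ᵀ ( #{(m,n): am+bn ≤ x} − x²/(2ab) − (a+b)x/(2ab) ) dx = 0. -/

import Mathlib

/-!
Summing over the first coordinate, `N(x) = ∑_{am ≤ x} (⌊(x - am)/b⌋ + 1)`, and replacing each
floor by its argument gives `N(x) = x²/(2ab) + O(x)`. The second-order term only appears on
average: `∫₀ᵀ N = ∑_{am + bn ≤ T} (T - am - bn)`, and the one-dimensional sums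
`∑_{cn ≤ s} (s - cn)^k`, `k = 1, 2`, equal `s^(k+1)/((k+1)c) + s^k/2` up to `O(c s^(k-1) + c^k)`
(the trapezoidal rule for a function vanishing at the right endpoint). Applying this first in `n`
and then in `m` gives `∫₀ᵀ N = T³/(6ab) + (a+b)T²/(4ab) + O(T)`.
-/

open Filter MeasureTheory intervalIntegral Finset

lemma le_floor_div_iff_mul_le {c s : ℝ} (hc : 0 < c) (hs : 0 ≤ s) {n : ℕ} :
    n ≤ ⌊s / c⌋₊ ↔ c * n ≤ s := by
  rw [Nat.le_floor_iff (div_nonneg hs hc.le), le_div_iff₀ hc, mul_comm]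

lemma sum_range_succ_sub_mul (c s : ℝ) (K : ℕ) :
    ∑ n ∈ range (K + 1), (s - c * n) = (K + 1) * s - c * (K * (K + 1) / 2) := by
  induction K with
  | zero => simp
  | succ K ih => rw [sum_range_succ, ih]; push_cast; ring

lemma sum_range_succ_sub_mul_sq (c s : ℝ) (K : ℕ) :
    ∑ n ∈ range (K + 1), (s - c * n) ^ 2 =
      (K + 1) * s ^ 2 - c * s * (K * (K + 1)) + c ^ 2 * (K * (K + 1) * (2 * K + 1) / 6) := by
  induction K with
  | zero => simp
  | succ K ih => rw [sum_range_succ, ih]; push_cast; ring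

section FloorSums

variable {c s : ℝ}

lemma sum_range_floor_sub_mul_bounds (hc : 0 < c) (hs : 0 ≤ s) :
    s ^ 2 / (2 * c) + s / 2 ≤ ∑ n ∈ range (⌊s / c⌋₊ + 1), (s - c * n) ∧
      ∑ n ∈ range (⌊s / c⌋₊ + 1), (s - c * n) ≤ s ^ 2 / (2 * c) + s / 2 + c / 8 := by
  set K := ⌊s / c⌋₊
  set θ := s / c - K
  have hθ₀ : 0 ≤ θ := sub_nonneg.2 (Nat.floor_le (div_nonneg hs hc.le))
  have hθ₁ : θ < 1 := by have := Nat.lt_floor_add_one (s / c); simp only [θ]; linarith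
  have key :
      ∑ n ∈ range (K + 1), (s - c * n) = s ^ 2 / (2 * c) + s / 2 + c * (θ * (1 - θ)) / 2 := by
    rw [sum_range_succ_sub_mul]; simp only [θ]; field_simp; ring
  rw [key]
  constructor
  · have : 0 ≤ c * (θ * (1 - θ)) := by have := hθ₁.le; positivity
    linarith
  · nlinarith [sq_nonneg (2 * θ - 1)]

lemma sum_range_floor_sub_mul_sq_bounds (hc : 0 < c) (hs : 0 ≤ s) :
    s ^ 3 / (3 * c) + s ^ 2 / 2 ≤ ∑ n ∈ range (⌊s / c⌋₊ + 1), (s - c * n) ^ 2 ∧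
      ∑ n ∈ range (⌊s / c⌋₊ + 1), (s - c * n) ^ 2 ≤
        s ^ 3 / (3 * c) + s ^ 2 / 2 + c * (s + c) / 6 := by
  set K := ⌊s / c⌋₊
  set θ := s / c - K
  have hθ₀ : 0 ≤ θ := sub_nonneg.2 (Nat.floor_le (div_nonneg hs hc.le))
  have hθ₁ : θ < 1 := by have := Nat.lt_floor_add_one (s / c); simp only [θ]; linarith
  have key : ∑ n ∈ range (K + 1), (s - c * n) ^ 2 =
      s ^ 3 / (3 * c) + s ^ 2 / 2 + c ^ 2 * (K + θ ^ 2 * (3 - 2 * θ)) / 6 := by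
    rw [sum_range_succ_sub_mul_sq]; simp only [θ]; field_simp; ring
  have hK : c ^ 2 * K ≤ c * s := by
    have : c * K ≤ s := (le_floor_div_iff_mul_le hc hs).1 le_rfl
    nlinarith
  rw [key]
  constructor
  · have : 0 ≤ c ^ 2 * (K + θ ^ 2 * (3 - 2 * θ)) :=
      mul_nonneg (sq_nonneg c) (add_nonneg K.cast_nonneg (mul_nonneg (sq_nonneg θ) (by linarith)))
    linarith
  · have : θ ^ 2 * (3 - 2 * θ) ≤ 1 := by nlinarith [mul_nonneg (sq_nonneg (1 - θ)) hθ₀]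
    nlinarith [sq_nonneg c]

end FloorSums

lemma integral_indicator_Ici_one {c T : ℝ} (hc : 0 ≤ c) (hcT : c ≤ T) :
    ∫ x in (0 : ℝ)..T, (Set.Ici c).indicator (1 : ℝ → ℝ) x = T - c := by
  rw [integral_of_le (hc.trans hcT), ← integral_Icc_eq_integral_Ioc,
    MeasureTheory.integral_indicator_one measurableSet_Ici,
    measureReal_restrict_apply measurableSet_Ici, ← Set.Ici_inter_Iic, ← Set.inter_assoc,
    Set.Ici_inter_Ici, sup_eq_left.2 hc, Set.Ici_inter_Iic, Real.volume_real_Icc_of_le hcT]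

lemma integral_card_filter_le {ι : Type*} (s : Finset ι) {c : ι → ℝ} {T : ℝ}
    (hc : ∀ i ∈ s, 0 ≤ c i ∧ c i ≤ T) :
    ∫ x in (0 : ℝ)..T, (#{i ∈ s | c i ≤ x} : ℝ) = ∑ i ∈ s, (T - c i) := by
  have hcard : ∀ x, (#{i ∈ s | c i ≤ x} : ℝ) = ∑ i ∈ s, (Set.Ici (c i)).indicator 1 x := by
    intro x
    rw [card_filter]
    push_cast
    simp [Set.indicator_apply]
  simp only [hcard]
  rw [intervalIntegral.integral_finsetSum]
  · exact sum_congr rfl fun i hi => integral_indicator_Ici_one (hc i hi).1 (hc i hi).2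
  · intro i _
    have h := intervalIntegrable_const (μ := volume) (a := 0) (b := T) (c := (1 : ℝ))
    exact ⟨h.1.indicator measurableSet_Ici, h.2.indicator measurableSet_Ici⟩

lemma tendsto_one_div_sq_mul_of_abs_le {f : ℝ → ℝ} {α β : ℝ}
    (h : ∀ᶠ T in atTop, |f T| ≤ α * T + β) :
    Tendsto (fun T => 1 / T ^ 2 * f T) atTop (nhds 0) := by
  have hlim : Tendsto (fun T : ℝ => α * T⁻¹ + β * (T ^ 2)⁻¹) atTop (nhds 0) := by
    simpa using (tendsto_inv_atTop_zero.const_mul α).add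
      ((tendsto_inv_atTop_zero.comp (tendsto_pow_atTop two_ne_zero)).const_mul β)
  refine squeeze_zero_norm' ?_ hlim
  filter_upwards [h, eventually_gt_atTop 0] with T hf hT
  rw [Real.norm_eq_abs, abs_mul, abs_of_pos (by positivity)]
  calc 1 / T ^ 2 * |f T| ≤ 1 / T ^ 2 * (α * T + β) := by gcongr
    _ = α * T⁻¹ + β * (T ^ 2)⁻¹ := by field_simp

noncomputable def weightedLatticePoints (a b x : ℝ) : Finset (ℕ × ℕ) :=
  (range (⌊x / a⌋₊ + 1) ×ˢ range (⌊x / b⌋₊ + 1)).filter fun p => a * p.1 + b * p.2 ≤ x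

section WeightedLatticePoints

variable {a b : ℝ}

lemma mem_weightedLatticePoints (ha : 0 < a) (hb : 0 < b) {x : ℝ} {p : ℕ × ℕ} :
    p ∈ weightedLatticePoints a b x ↔ a * p.1 + b * p.2 ≤ x := by
  simp only [weightedLatticePoints, mem_filter, mem_product, mem_range, Nat.lt_succ_iff,
    and_iff_right_iff_imp]
  intro h
  have hx : 0 ≤ x := le_trans (by positivity) h
  rw [le_floor_div_iff_mul_le ha hx, le_floor_div_iff_mul_le hb hx]
  constructor <;> linarith [mul_nonneg ha.le p.1.cast_nonneg, mul_nonneg hb.le p.2.cast_nonneg]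

lemma coe_weightedLatticePoints (ha : 0 < a) (hb : 0 < b) (x : ℝ) :
    (weightedLatticePoints a b x : Set (ℕ × ℕ)) = {p | a * p.1 + b * p.2 ≤ x} :=
  Set.ext fun _ => mem_weightedLatticePoints ha hb

lemma sum_weightedLatticePoints {M : Type*} [AddCommMonoid M] (ha : 0 < a) (hb : 0 < b) {x : ℝ}
    (hx : 0 ≤ x) (g : ℕ × ℕ → M) :
    ∑ p ∈ weightedLatticePoints a b x, g p =
      ∑ m ∈ range (⌊x / a⌋₊ + 1), ∑ n ∈ range (⌊(x - a * m) / b⌋₊ + 1), g (m, n) := by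
  refine sum_finset_product _ _ _ fun p => ?_
  simp only [mem_weightedLatticePoints ha hb, mem_range, Nat.lt_succ_iff,
    le_floor_div_iff_mul_le ha hx]
  constructor
  · intro h
    have ham : a * p.1 ≤ x := by linarith [mul_nonneg hb.le p.2.cast_nonneg]
    exact ⟨ham, (le_floor_div_iff_mul_le hb (sub_nonneg.2 ham)).2 (by linarith)⟩
  · rintro ⟨ham, hbn⟩
    have := (le_floor_div_iff_mul_le hb (sub_nonneg.2 ham)).1 hbn
    linarith

lemma card_weightedLatticePoints_bounds (ha : 0 < a) (hb : 0 < b) {x : ℝ} (hx : 0 ≤ x) :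
    x ^ 2 / (2 * a * b) + x / (2 * b) ≤ #(weightedLatticePoints a b x) ∧
      (#(weightedLatticePoints a b x) : ℝ) ≤
        x ^ 2 / (2 * a * b) + x / (2 * b) + a / (8 * b) + (x / a + 1) := by
  have hcard : (#(weightedLatticePoints a b x) : ℝ) =
      ∑ m ∈ range (⌊x / a⌋₊ + 1), ((⌊(x - a * m) / b⌋₊ : ℝ) + 1) := by
    rw [card_eq_sum_ones, sum_weightedLatticePoints ha hb hx]
    simp
  set L := ∑ m ∈ range (⌊x / a⌋₊ + 1), (x - a * m)
  obtain ⟨hL₁, hL₂⟩ : x ^ 2 / (2 * a) + x / 2 ≤ L ∧ L ≤ x ^ 2 / (2 * a) + x / 2 + a / 8 :=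
    sum_range_floor_sub_mul_bounds ha hx
  have hsub : ∀ m ∈ range (⌊x / a⌋₊ + 1), 0 ≤ x - a * m := fun m hm => by
    rw [mem_range, Nat.lt_succ_iff, le_floor_div_iff_mul_le ha hx] at hm
    exact sub_nonneg.2 hm
  have hlow : L / b ≤ ∑ m ∈ range (⌊x / a⌋₊ + 1), ((⌊(x - a * m) / b⌋₊ : ℝ) + 1) := by
    rw [sum_div]
    exact sum_le_sum fun m _ => (Nat.lt_floor_add_one _).le
  have hup : ∑ m ∈ range (⌊x / a⌋₊ + 1), ((⌊(x - a * m) / b⌋₊ : ℝ) + 1) ≤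
      L / b + (⌊x / a⌋₊ + 1) := by
    calc _ ≤ ∑ m ∈ range (⌊x / a⌋₊ + 1), ((x - a * m) / b + 1) :=
          sum_le_sum fun m hm => by
            grw [Nat.floor_le (div_nonneg (hsub m hm) hb.le)]
      _ = L / b + (⌊x / a⌋₊ + 1) := by rw [sum_add_distrib, ← sum_div]; simp [L]
  have hM : (⌊x / a⌋₊ : ℝ) ≤ x / a := Nat.floor_le (div_nonneg hx ha.le)
  have hmain : x ^ 2 / (2 * a * b) + x / (2 * b) = (x ^ 2 / (2 * a) + x / 2) / b := by
    field_simp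
  rw [hcard, hmain]
  constructor
  · grw [hL₁]; exact hlow
  · grw [hup, hL₂, hM]
    exact le_of_eq (by ring)

lemma abs_card_weightedLatticePoints_sub_le (ha : 0 < a) (hb : 0 < b) {x : ℝ} (hx : 1 ≤ x) :
    |(#(weightedLatticePoints a b x) : ℝ) - x ^ 2 / (2 * a * b)| ≤
      (1 / (2 * b) + a / (8 * b) + 1 / a + 1) * x := by
  obtain ⟨hlow, hup⟩ := card_weightedLatticePoints_bounds ha hb (zero_le_one.trans hx)
  have : a / (8 * b) ≤ a / (8 * b) * x := le_mul_of_one_le_right (by positivity) hx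
  have : (1 / (2 * b) + a / (8 * b) + 1 / a + 1) * x =
      x / (2 * b) + a / (8 * b) * x + x / a + x := by ring
  have : 0 ≤ x / (2 * b) := by positivity
  have : 0 ≤ x / a := by positivity
  rw [abs_le]
  constructor <;> linarith

lemma weightedLatticePoints_eq_filter (ha : 0 < a) (hb : 0 < b) {x T : ℝ} (hxT : x ≤ T) :
    weightedLatticePoints a b x = {p ∈ weightedLatticePoints a b T | a * p.1 + b * p.2 ≤ x} := by
  ext p
  simp only [mem_filter, mem_weightedLatticePoints ha hb]
  exact ⟨fun h => ⟨h.trans hxT, h⟩, And.right⟩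

lemma sum_weightedLatticePoints_sub_bounds (ha : 0 < a) (hb : 0 < b) {T : ℝ} (hT : 0 ≤ T) :
    ∑ m ∈ range (⌊T / a⌋₊ + 1), ((T - a * m) ^ 2 / (2 * b) + (T - a * m) / 2) ≤
        ∑ p ∈ weightedLatticePoints a b T, (T - (a * p.1 + b * p.2)) ∧
      ∑ p ∈ weightedLatticePoints a b T, (T - (a * p.1 + b * p.2)) ≤
        ∑ m ∈ range (⌊T / a⌋₊ + 1), ((T - a * m) ^ 2 / (2 * b) + (T - a * m) / 2 + b / 8) := by
  have hsplit : ∀ m n : ℕ, T - (a * m + b * n) = (T - a * m) - b * n := fun _ _ => by ring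
  have hinner : ∀ m ∈ range (⌊T / a⌋₊ + 1),
      (T - a * m) ^ 2 / (2 * b) + (T - a * m) / 2 ≤
          ∑ n ∈ range (⌊(T - a * m) / b⌋₊ + 1), ((T - a * m) - b * n) ∧
        ∑ n ∈ range (⌊(T - a * m) / b⌋₊ + 1), ((T - a * m) - b * n) ≤
          (T - a * m) ^ 2 / (2 * b) + (T - a * m) / 2 + b / 8 := fun m hm => by
    rw [mem_range, Nat.lt_succ_iff, le_floor_div_iff_mul_le ha hT] at hm
    exact sum_range_floor_sub_mul_bounds hb (sub_nonneg.2 hm)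
  rw [sum_weightedLatticePoints ha hb hT]
  simp only [hsplit]
  exact ⟨sum_le_sum fun m hm => (hinner m hm).1, sum_le_sum fun m hm => (hinner m hm).2⟩

lemma abs_sum_weightedLatticePoints_sub_le (ha : 0 < a) (hb : 0 < b) {T : ℝ} (hT : 0 ≤ T) :
    |∑ p ∈ weightedLatticePoints a b T, (T - (a * p.1 + b * p.2)) -
        (T ^ 3 / (6 * a * b) + (a + b) * T ^ 2 / (4 * a * b))| ≤
      (1 / 4 + a / (12 * b) + b / (8 * a)) * T + (a ^ 2 / (12 * b) + a / 16 + b / 8) := by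
  obtain ⟨hlow, hup⟩ := sum_weightedLatticePoints_sub_bounds ha hb hT
  rw [sum_add_distrib, ← sum_div, ← sum_div] at hlow
  rw [sum_add_distrib, sum_add_distrib, ← sum_div, ← sum_div, sum_const, card_range,
    nsmul_eq_mul] at hup
  set M := ⌊T / a⌋₊
  set Q := ∑ m ∈ range (M + 1), (T - a * m) ^ 2
  set L := ∑ m ∈ range (M + 1), (T - a * m)
  obtain ⟨hQ₁, hQ₂⟩ :
      T ^ 3 / (3 * a) + T ^ 2 / 2 ≤ Q ∧ Q ≤ T ^ 3 / (3 * a) + T ^ 2 / 2 + a * (T + a) / 6 :=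
    sum_range_floor_sub_mul_sq_bounds ha hT
  obtain ⟨hL₁, hL₂⟩ : T ^ 2 / (2 * a) + T / 2 ≤ L ∧ L ≤ T ^ 2 / (2 * a) + T / 2 + a / 8 :=
    sum_range_floor_sub_mul_bounds ha hT
  have hM : (M : ℝ) ≤ T / a := Nat.floor_le (div_nonneg hT ha.le)
  rw [abs_le]
  constructor
  · grw [← hlow, ← hQ₁, ← hL₁]
    have : 0 ≤ (1 / 4 + a / (12 * b) + b / (8 * a)) * T + (a ^ 2 / (12 * b) + a / 16 + b / 8) := by
      positivity
    have : (T ^ 3 / (3 * a) + T ^ 2 / 2) / (2 * b) + (T ^ 2 / (2 * a) + T / 2) / 2 -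
        (T ^ 3 / (6 * a * b) + (a + b) * T ^ 2 / (4 * a * b)) = T / 4 := by
      field_simp; ring
    linarith
  · grw [hup, hQ₂, hL₂]
    push_cast
    grw [hM]
    exact le_of_eq (by field_simp; ring)

lemma integral_card_weightedLatticePoints (ha : 0 < a) (hb : 0 < b) {T : ℝ} (hT : 0 ≤ T) :
    ∫ x in (0 : ℝ)..T, (#(weightedLatticePoints a b x) : ℝ) =
      ∑ p ∈ weightedLatticePoints a b T, (T - (a * p.1 + b * p.2)) := by
  rw [← integral_card_filter_le _ fun p hp =>
    ⟨by positivity, (mem_weightedLatticePoints ha hb).1 hp⟩]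
  refine integral_congr fun x hx => ?_
  rw [Set.uIcc_of_le hT] at hx
  simp only [weightedLatticePoints_eq_filter ha hb hx.2]

lemma integral_card_weightedLatticePoints_sub (ha : 0 < a) (hb : 0 < b) {T : ℝ} (hT : 0 ≤ T) :
    ∫ x in (0 : ℝ)..T,
        ((#(weightedLatticePoints a b x) : ℝ) - x ^ 2 / (2 * a * b) - (a + b) * x / (2 * a * b)) =
      ∑ p ∈ weightedLatticePoints a b T, (T - (a * p.1 + b * p.2)) -
        (T ^ 3 / (6 * a * b) + (a + b) * T ^ 2 / (4 * a * b)) := by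
  have hN : IntervalIntegrable (fun x => (#(weightedLatticePoints a b x) : ℝ)) volume 0 T := by
    refine Monotone.intervalIntegrable fun x y hxy => ?_
    rw [weightedLatticePoints_eq_filter ha hb hxy]
    exact_mod_cast card_filter_le _ _
  have hp₁ : IntervalIntegrable (fun x : ℝ => x ^ 2 / (2 * a * b)) volume 0 T :=
    Continuous.intervalIntegrable (by fun_prop) _ _
  have hp₂ : IntervalIntegrable (fun x : ℝ => (a + b) * x / (2 * a * b)) volume 0 T :=
    Continuous.intervalIntegrable (by fun_prop) _ _
  rw [intervalIntegral.integral_sub (hN.sub hp₁) hp₂, intervalIntegral.integral_sub hN hp₁,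
    integral_card_weightedLatticePoints ha hb hT, intervalIntegral.integral_div, integral_pow,
    intervalIntegral.integral_div, intervalIntegral.integral_const_mul, integral_id]
  ring

end WeightedLatticePoints

/-- **Two-weight averaged asymptotic Riemann–Roch.**
Let `a, b > 0` be real.  Then
`#{(m,n) ∈ ℤ₊² : am + bn ≤ x} = x²/(2ab) + O(x)` as `x → ∞`, and moreover
`lim_{T→∞} (1/T²)·∫₀ᵀ ( #{(m,n) : am+bn ≤ x} − x²/(2ab) − (a+b)x/(2ab) ) dx = 0`. -/
theorem two_weight_averaged_RR (a b : ℝ) (ha : 0 < a) (hb : 0 < b) :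
    (∃ C : ℝ, ∀ x : ℝ, 1 ≤ x →
      |((Set.ncard {p : ℕ × ℕ | a * (p.1 : ℝ) + b * (p.2 : ℝ) ≤ x} : ℕ) : ℝ)
        - x ^ 2 / (2 * a * b)| ≤ C * x) ∧
    Tendsto (fun T : ℝ =>
        (1 / T ^ 2) * ∫ x in (0:ℝ)..T,
          (((Set.ncard {p : ℕ × ℕ | a * (p.1 : ℝ) + b * (p.2 : ℝ) ≤ x} : ℕ) : ℝ)
            - x ^ 2 / (2 * a * b) - (a + b) * x / (2 * a * b)))
      atTop (nhds 0) := by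
  have hncard : ∀ x, Set.ncard {p : ℕ × ℕ | a * (p.1 : ℝ) + b * (p.2 : ℝ) ≤ x} =
      #(weightedLatticePoints a b x) := fun x => by
    rw [← coe_weightedLatticePoints ha hb, Set.ncard_coe_finset]
  simp only [hncard]
  refine ⟨⟨_, fun x => abs_card_weightedLatticePoints_sub_le ha hb⟩, ?_⟩
  apply tendsto_one_div_sq_mul_of_abs_le
  filter_upwards [eventually_ge_atTop 0] with T hT
  rw [integral_card_weightedLatticePoints_sub ha hb hT]
  exact abs_sum_weightedLatticePoints_sub_le ha hb hT
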